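/- arXiv:2506.10368 — 2 statements merged into one kernel-verified Lean document; each statement's English description precedes it below -/
import Mathlib

section
/- Let (Q,𝔫) be a regular local ring of dimension c ≥ 2 with algebraically closed residue field k = Q/𝔫, let f₁,…,f_c ∈ 𝔫² be a Q-regular sequence, and set A = Q/(f₁,…,f_c), so that A is an Artinian local complete intersection of complexity c. Assume ℓ(A) is even. Assume there exists a finitely generated indecomposable A-module H with no nonzero free direct summand, an odd integer μ equal to the minimal number of generators of H, and a short exact sequence of A-modules 0 → H → A^μ → H → 0 (i.e., Ω_A(H) ≅ H). Then there exists an integer m ≥ 2 (depending only on A) such that m divides ℓ(M) for every finitely generated A-module M satisfying Tor_i^A(H, M) = 0 for all i ≥ 1. -/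
/-!
Since `Tor₁(H, M) = 0`, tensoring `0 → H → A^μ → H → 0` with `M` keeps it exact: writing
`0 → B → R₀ → M → 0` with `R₀` projective, vanishing of `Tor₁` makes `H ⊗ B → H ⊗ R₀` injective,
and a chase through the tensored sequences gives injectivity of `H ⊗ M → M^μ`. Additivity of
length then gives `μ · ℓ(M) = 2 · ℓ(H ⊗ M)`, so `2 ∣ ℓ(M)` because `μ` is odd: `m = 2` works.
-/

open CategoryTheory

/-- The length of a module: the Krull dimension of its lattice of submodules,
i.e. the supremum of lengths of chains of submodules. -/
noncomputable def moduleLength (R M : Type*) [Ring R] [AddCommGroup M] [Module R M] : ℕ∞ :=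
  WithBot.unbotD 0 (Order.krullDim (Submodule R M))

theorem moduleLength_eq_length (R M : Type*) [Ring R] [AddCommGroup M] [Module R M] :
    moduleLength R M = Module.length R M := by
  rw [moduleLength, ← Module.coe_length, WithBot.unbotD_coe]

theorem ENat.two_dvd_of_odd_mul_eq_add_self {μ : ℕ} (hμ : Odd μ) {a b : ℕ∞}
    (h : μ * a = b + b) : 2 ∣ a := by
  rcases eq_or_ne a ⊤ with rfl | ha
  · exact ⟨⊤, by simp⟩
  lift a to ℕ using ha
  have hb : b ≠ ⊤ := by
    rintro rfl
    rw [add_top, ← Nat.cast_mul] at h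
    exact ENat.natCast_ne_top _ h
  lift b to ℕ using hb
  have h2 : 2 ∣ μ * a := ⟨b, by rw [two_mul]; exact_mod_cast h⟩
  obtain ⟨k, rfl⟩ := (Nat.Coprime.dvd_mul_left (Nat.coprime_two_left.2 hμ)).1 h2
  exact ⟨k, by push_cast; rfl⟩

open TensorProduct

namespace LinearMap

variable {R : Type*} [CommRing R]

theorem rTensor_lTensor_comm_apply {X Y X' Y' : Type*} [AddCommGroup X] [Module R X]
    [AddCommGroup Y] [Module R Y] [AddCommGroup X'] [Module R X'] [AddCommGroup Y'] [Module R Y']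
    (f : X →ₗ[R] X') (g : Y →ₗ[R] Y') (z : X ⊗[R] Y) :
    f.rTensor Y' (g.lTensor X z) = g.lTensor X' (f.rTensor Y z) := by
  rw [← comp_apply, rTensor_comp_lTensor, ← lTensor_comp_rTensor, comp_apply]

theorem lTensor_injective_of_exact_lTensor {P G₂ G₁ K G₀ : Type*}
    [AddCommGroup P] [Module R P] [AddCommGroup G₂] [Module R G₂] [AddCommGroup G₁]
    [Module R G₁] [AddCommGroup K] [Module R K] [AddCommGroup G₀] [Module R G₀]
    (g₂ : G₂ →ₗ[R] G₁) (s : G₁ →ₗ[R] K) (j : K →ₗ[R] G₀) (hs : Function.Surjective s)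
    (hsg : s ∘ₗ g₂ = 0) (h : Function.Exact (g₂.lTensor P) ((j ∘ₗ s).lTensor P)) :
    Function.Injective (j.lTensor P) := by
  refine (injective_iff_map_eq_zero _).2 fun x hx => ?_
  obtain ⟨y, rfl⟩ := lTensor_surjective P hs x
  obtain ⟨w, rfl⟩ := (h y).1 (by rwa [lTensor_comp, comp_apply])
  rw [← comp_apply, ← lTensor_comp, hsg, lTensor_zero, zero_apply]

theorem rTensor_injective_of_lTensor_injective {N F P K G M : Type*}
    [AddCommGroup N] [Module R N] [AddCommGroup F] [Module R F] [AddCommGroup P] [Module R P]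
    [AddCommGroup K] [Module R K] [AddCommGroup G] [Module R G] [AddCommGroup M] [Module R M]
    [Module.Flat R G] (ι : N →ₗ[R] F) (π : F →ₗ[R] P) (hι : Function.Injective ι)
    (hιπ : Function.Exact ι π) (hπ : Function.Surjective π)
    (j : K →ₗ[R] G) (p : G →ₗ[R] M) (hjp : Function.Exact j p) (hp : Function.Surjective p)
    (hK : Function.Injective (j.lTensor P)) :
    Function.Injective (ι.rTensor M) := by
  refine (injective_iff_map_eq_zero _).2 fun x hx => ?_
  obtain ⟨y, rfl⟩ := lTensor_surjective N hp x
  obtain ⟨z, hz⟩ := (lTensor_exact F hjp hp (ι.rTensor G y)).1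
    (by rwa [← rTensor_lTensor_comm_apply])
  have hπz : π.rTensor K z = 0 := by
    refine (injective_iff_map_eq_zero _).1 hK _ ?_
    rw [← rTensor_lTensor_comm_apply, hz, ← comp_apply, ← rTensor_comp,
      hιπ.linearMap_comp_eq_zero, rTensor_zero, zero_apply]
  obtain ⟨u, rfl⟩ := (rTensor_exact K hιπ hπ _).1 hπz
  have hu : j.lTensor N u = y :=
    Module.Flat.rTensor_preserves_injective_linearMap ι hι
      (by rw [rTensor_lTensor_comm_apply, hz])
  rw [← hu, ← comp_apply, ← lTensor_comp, hjp.linearMap_comp_eq_zero, lTensor_zero, zero_apply]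

end LinearMap

theorem Module.card_mul_length_eq_length_rTensor_add {R ι N P M : Type*} [CommRing R]
    [Fintype ι] [AddCommGroup N] [Module R N] [AddCommGroup P] [Module R P]
    [AddCommGroup M] [Module R M] (f : N →ₗ[R] (ι → R)) (g : (ι → R) →ₗ[R] P)
    (hf : Function.Injective (f.rTensor M)) (hfg : Function.Exact f g)
    (hg : Function.Surjective g) :
    Fintype.card ι * Module.length R M =
      Module.length R (N ⊗[R] M) + Module.length R (P ⊗[R] M) := by
  classical
  rw [← Module.length_eq_add_of_exact _ _ hf (LinearMap.rTensor_surjective M hg)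
    (rTensor_exact M hfg hg),
    ((TensorProduct.comm R _ _).trans (TensorProduct.piScalarRight R R M ι)).length_eq,
    Module.length_pi, ENat.card_eq_coe_fintype_card]

namespace CategoryTheory.ProjectiveResolution

variable {A : Type} [CommRing A] {M : Type} [AddCommGroup M] [Module A M]
  (R : ProjectiveResolution (ModuleCat.of A M))

instance flat_X (n : ℕ) : Module.Flat A (R.complex.X n) :=
  have := (IsProjective.iff_projective (R.complex.X n)).2 (R.projective n)
  Module.Flat.of_projective

theorem exact_d_one_zero_π_f_zero :
    Function.Exact (R.complex.d 1 0).hom ((R.π.f 0).hom : R.complex.X 0 →ₗ[A] M) :=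
  (ShortComplex.ShortExact.moduleCat_exact_iff_function_exact
    (ShortComplex.mk _ _ R.complex_d_comp_π_f_zero)).1
    (ShortComplex.exact_of_g_is_cokernel _ R.isColimitCokernelCofork)

theorem surjective_π_f_zero :
    Function.Surjective ((R.π.f 0).hom : R.complex.X 0 →ₗ[A] M) :=
  (ModuleCat.epi_iff_surjective (R.π.f 0)).1 inferInstance

theorem exact_lTensor_d_of_subsingleton_tor_one (P : Type) [AddCommGroup P] [Module A P]
    (hTor : Subsingleton (((Tor (ModuleCat A) 1).obj (ModuleCat.of A P)).obj
      (ModuleCat.of A M))) :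
    Function.Exact ((R.complex.d 2 1).hom.lTensor P) ((R.complex.d 1 0).hom.lTensor P) := by
  set F := (MonoidalCategory.tensoringLeft (ModuleCat A)).obj (ModuleCat.of A P)
  have hzero : Limits.IsZero
      (((F.mapHomologicalComplex (ComplexShape.down ℕ)).obj R.complex).homology 1) :=
    (@ModuleCat.isZero_of_subsingleton _ _ _ hTor).of_iso (R.isoLeftDerivedObj F 1).symm
  exact (ShortComplex.ShortExact.moduleCat_exact_iff_function_exact _).1
    ((HomologicalComplex.exactAt_iff' _ 2 1 0 (by simp) (by simp)).1
      ((HomologicalComplex.exactAt_iff_isZero_homology _ _).2 hzero))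

end CategoryTheory.ProjectiveResolution

theorem LinearMap.rTensor_injective_of_subsingleton_tor_one {A : Type} [CommRing A]
    {N F P M : Type} [AddCommGroup N] [Module A N] [AddCommGroup F] [Module A F]
    [AddCommGroup P] [Module A P] [AddCommGroup M] [Module A M]
    (ι : N →ₗ[A] F) (π : F →ₗ[A] P) (hι : Function.Injective ι)
    (hιπ : Function.Exact ι π) (hπ : Function.Surjective π)
    (hTor : Subsingleton (((Tor (ModuleCat A) 1).obj (ModuleCat.of A P)).obj
      (ModuleCat.of A M))) :
    Function.Injective (ι.rTensor M) := by
  obtain ⟨R⟩ : Nonempty (ProjectiveResolution (ModuleCat.of A M)) := HasProjectiveResolution.out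
  set d₁ := (R.complex.d 1 0).hom
  have hd₁ : Function.Exact d₁ ((R.π.f 0).hom : R.complex.X 0 →ₗ[A] M) :=
    R.exact_d_one_zero_π_f_zero
  refine rTensor_injective_of_lTensor_injective ι π hι hιπ hπ (range d₁).subtype _
    (LinearMap.exact_iff.2 (hd₁.linearMap_ker_eq.trans (Submodule.range_subtype _).symm))
    R.surjective_π_f_zero ?_
  refine lTensor_injective_of_exact_lTensor (R.complex.d 2 1).hom d₁.rangeRestrict _
    d₁.surjective_rangeRestrict ?_ (R.exact_lTensor_d_of_subsingleton_tor_one P hTor)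
  ext x
  exact congr($(R.complex.d_comp_d 2 1 0) x)

theorem stmt_0_general
    (A : Type) [CommRing A]
    (H : Type) [AddCommGroup H] [Module A H]
    (μ : ℕ) (hodd : Odd μ)
    (hses : ∃ (ι : H →ₗ[A] (Fin μ → A)) (π : (Fin μ → A) →ₗ[A] H),
      Function.Injective ι ∧ Function.Exact ι π ∧ Function.Surjective π) :
    ∃ m : ℕ, 2 ≤ m ∧
      ∀ (M : Type) [AddCommGroup M] [Module A M] [Module.Finite A M],
        (∀ i : ℕ, 1 ≤ i →
          Subsingleton
            (((Tor (ModuleCat A) i).obj (ModuleCat.of A H)).obj (ModuleCat.of A M))) →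
        (m : ℕ∞) ∣ moduleLength A M := by
  obtain ⟨ι, π, hι, hιπ, hπ⟩ := hses
  refine ⟨2, le_rfl, fun M _ _ _ hTor => ?_⟩
  have hinj := ι.rTensor_injective_of_subsingleton_tor_one π hι hιπ hπ (hTor 1 le_rfl)
  have hlen := Module.card_mul_length_eq_length_rTensor_add ι π hinj hιπ hπ
  rw [Fintype.card_fin] at hlen
  rw [moduleLength_eq_length]
  exact ENat.two_dvd_of_odd_mul_eq_add_self hodd hlen

/-- `Q` is a regular local ring of dimension `c ≥ 2` (Noetherian local,
Krull dimension `c`, maximal ideal generated by `c` elements) with algebraically closed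
residue field; `f : Fin c → Q` is a regular sequence inside `𝔫²`, and `A = Q/(f₁,…,f_c)`
(presented as a surjection `q : Q →+* A` with kernel `(f₁,…,f_c)`).  Assume `ℓ(A)` is even,
and that `H` is a nonzero finitely generated indecomposable `A`-module with no nonzero free
direct summand, whose minimal number of generators `μ` is odd, together with a short exact
sequence `0 → H → A^μ → H → 0`.  Then there is `m ≥ 2` dividing `ℓ(M)` for every finitely
generated `A`-module `M` with `Tor_i^A(H, M) = 0` for all `i ≥ 1`. -/
theorem stmt_0
    (Q : Type) [CommRing Q] [IsLocalRing Q] [IsNoetherianRing Q]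
    [IsAlgClosed (IsLocalRing.ResidueField Q)]
    (c : ℕ) (hc : 2 ≤ c)
    (hdim : ringKrullDim Q = c)
    (hregular : ∃ s : Finset Q, s.card = c ∧
      Ideal.span (s : Set Q) = IsLocalRing.maximalIdeal Q)
    (f : Fin c → Q)
    (hf2 : ∀ i, f i ∈ IsLocalRing.maximalIdeal Q ^ 2)
    (hfreg : RingTheory.Sequence.IsRegular Q (List.ofFn f))
    (A : Type) [CommRing A]
    (q : Q →+* A) (hq : Function.Surjective q)
    (hker : RingHom.ker q = Ideal.span (Set.range f))
    (heven : Even (moduleLength A A))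
    (H : Type) [AddCommGroup H] [Module A H] [Module.Finite A H] [Nontrivial H]
    (hindec : ∀ (U V : Type) [AddCommGroup U] [Module A U] [AddCommGroup V] [Module A V],
      (H ≃ₗ[A] U × V) → (Subsingleton U ∨ Subsingleton V))
    (hnofree : ∀ (V : Type) [AddCommGroup V] [Module A V], IsEmpty (H ≃ₗ[A] (A × V)))
    (μ : ℕ) (hodd : Odd μ)
    (hμ : IsLeast {n : ℕ | ∃ p : (Fin n → A) →ₗ[A] H, Function.Surjective p} μ)
    (hses : ∃ (ι : H →ₗ[A] (Fin μ → A)) (π : (Fin μ → A) →ₗ[A] H),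
      Function.Injective ι ∧ Function.Exact ι π ∧ Function.Surjective π) :
    ∃ m : ℕ, 2 ≤ m ∧
      ∀ (M : Type) [AddCommGroup M] [Module A M] [Module.Finite A M],
        (∀ i : ℕ, 1 ≤ i →
          Subsingleton
            (((Tor (ModuleCat A) i).obj (ModuleCat.of A H)).obj (ModuleCat.of A M))) →
        (m : ℕ∞) ∣ moduleLength A M :=
  stmt_0_general A H μ hodd hses
end

section
/- Let (Q,𝔫) be a regular local ring of dimension c ≥ 2 with algebraically closed residue field k = Q/𝔫. Let f₁,…,f_{c-1}, g be a Q-regular sequence with f_i ∈ 𝔫² for all i and g ∈ 𝔫. Set A = Q/(f₁,…,f_{c-1}, g^r) with r ≥ 2, and set H = Q/(f₁,…,f_{c-1}, g), regarded as an A-module. Then there exists an integer m ≥ 2 (depending only on A) such that m divides ℓ(M) for every finitely generated A-module M satisfying Tor_i^A(H, M) = 0 for all i ≥ 1. -/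
/-!
Let `x` be the image of `g` in `A`. Since `g` is regular modulo `(f₁, …, f_{c-1})`, we have
`x ^ r = 0` and the annihilator of `x` in `A` is `x ^ (r - 1) A`. Computing `Tor₁(A/xA, M)` from
a projective resolution of `M` (whose terms are flat, so inherit this annihilator property) shows
that its vanishing forces `ker (x • ·) ⊆ x ^ (r - 1) M`. Then multiplication by `x ^ j` maps
`ker x ^ (j + 1)` onto `ker x` with kernel `ker x ^ j`, so the `r` steps of the filtration
`0 = ker x ^ 0 ⊆ ker x ⊆ ⋯ ⊆ ker x ^ r = M` all have length `ℓ(ker x)`, and `ℓ(M) = r ℓ(ker x)`.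
Hence `m = r` works.
-/

open CategoryTheory

section Length

open LinearMap

variable {A M : Type*} [CommRing A] [AddCommGroup M] [Module A M] {x : A} {r : ℕ}

theorem Module.length_ker_lsmul_pow_succ
    (hker : ker (lsmul A M x) ≤ range (lsmul A M (x ^ (r - 1)))) {j : ℕ} (hj : j < r) :
    Module.length A (ker (lsmul A M (x ^ (j + 1)))) =
      Module.length A (ker (lsmul A M (x ^ j))) + Module.length A (ker (lsmul A M x)) := by
  have hle : ker (lsmul A M (x ^ j)) ≤ ker (lsmul A M (x ^ (j + 1))) := fun m hm => by
    simp only [mem_ker, lsmul_apply] at hm ⊢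
    rw [pow_succ', mul_smul, hm, smul_zero]
  let g : ker (lsmul A M (x ^ (j + 1))) →ₗ[A] ker (lsmul A M x) :=
    (lsmul A M (x ^ j)).restrict fun m hm => by
      simp only [mem_ker, lsmul_apply] at hm ⊢
      rwa [← mul_smul, ← pow_succ']
  refine Module.length_eq_add_of_exact (Submodule.inclusion hle) g
    (Submodule.inclusion_injective hle) ?_ ?_
  · rintro ⟨k, hk⟩
    obtain ⟨m, rfl⟩ := hker hk
    have hr : r - 1 = j + (r - 1 - j) := by omega
    refine ⟨⟨x ^ (r - 1 - j) • m, ?_⟩, ?_⟩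
    · simp only [mem_ker, lsmul_apply] at hk ⊢
      rwa [smul_smul, ← pow_add, add_right_comm, ← hr, pow_succ', mul_smul]
    · ext
      simp only [g, restrict_apply, lsmul_apply, smul_smul, ← pow_add, ← hr]
  · rintro ⟨m, hm⟩
    simp [g, Subtype.ext_iff]

theorem Module.length_eq_mul_length_ker_lsmul (hx : x ^ r = 0)
    (hker : ker (lsmul A M x) ≤ range (lsmul A M (x ^ (r - 1)))) :
    Module.length A M = r * Module.length A (ker (lsmul A M x)) := by
  have key : ∀ j ≤ r,
      Module.length A (ker (lsmul A M (x ^ j))) = j * Module.length A (ker (lsmul A M x)) := by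
    intro j
    induction j with
    | zero =>
      intro _
      have : ker (lsmul A M (x ^ 0)) = ⊥ := by ext; simp
      rw [this, Module.length_bot, Nat.cast_zero, zero_mul]
    | succ j ih =>
      intro hj
      rw [Module.length_ker_lsmul_pow_succ hker hj, ih (by omega)]
      push_cast
      ring
  rw [← key r le_rfl, hx, map_zero, ker_zero, Module.length_top]

end Length

open LinearMap in
theorem Module.Flat.ker_lsmul_le_range_lsmul {A P : Type*} [CommRing A] [AddCommGroup P]
    [Module A P] [Module.Flat A P] {x y : A} (hA : ker (lsmul A A x) ≤ range (lsmul A A y)) :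
    ker (lsmul A P x) ≤ range (lsmul A P y) := by
  intro p hp
  obtain ⟨k, a, z, hpz, ha⟩ := Module.Flat.isTrivialRelation_of_sum_smul_eq_zero
    (f := fun _ : Unit => x) (x := fun _ => p) (by simpa using hp)
  have hb : ∀ j, ∃ b, y • b = a () j := fun j => hA (by simpa using ha j)
  choose b hb using hb
  refine ⟨∑ j, b j • z j, ?_⟩
  simp [hpz (), smul_smul, ← hb, mul_comm]

universe u

section Tor

open LinearMap

variable {A : Type u} [CommRing A]

theorem Ideal.span_singleton_smul_top_eq_range_lsmul {M : Type*} [AddCommGroup M] [Module A M]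
    (x : A) : Ideal.span {x} • (⊤ : Submodule A M) = range (lsmul A M x) := by
  ext m
  simp [Submodule.ideal_span_singleton_smul, Submodule.mem_smul_pointwise_iff_exists]

open TensorProduct in
theorem mem_range_sup_smul_top_of_exact_lTensor {N₂ N₁ N₀ : Type*}
    [AddCommGroup N₂] [Module A N₂] [AddCommGroup N₁] [Module A N₁] [AddCommGroup N₀] [Module A N₀]
    {I : Ideal A} {d₂ : N₂ →ₗ[A] N₁} {d₁ : N₁ →ₗ[A] N₀}
    (hex : Function.Exact (d₂.lTensor (A ⧸ I)) (d₁.lTensor (A ⧸ I)))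
    {u : N₁} (hu : d₁ u ∈ I • (⊤ : Submodule A N₀)) : u ∈ range d₂ ⊔ I • ⊤ := by
  have hcycle : d₁.lTensor (A ⧸ I) (1 ⊗ₜ u) = 0 := by
    rw [lTensor_tmul, ← quotTensorEquivQuotSMul_symm_mk,
      (Submodule.Quotient.mk_eq_zero _).mpr hu, map_zero]
  obtain ⟨t, ht⟩ := (hex _).mp hcycle
  obtain ⟨v, hv⟩ := Submodule.mkQ_surjective _ (quotTensorEquivQuotSMul N₂ I t)
  rw [← (quotTensorEquivQuotSMul N₂ I).symm_apply_apply t, ← hv, Submodule.mkQ_apply,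
    quotTensorEquivQuotSMul_symm_mk, lTensor_tmul] at ht
  have hquot := congrArg (quotTensorEquivQuotSMul N₁ I) ht
  rw [quotTensorEquivQuotSMul_mk_one_tmul, quotTensorEquivQuotSMul_mk_one_tmul,
    Submodule.Quotient.eq] at hquot
  rw [← sub_sub_cancel (d₂ v) u]
  exact Submodule.sub_mem_sup (mem_range_self d₂ v) hquot

theorem CategoryTheory.ProjectiveResolution.exact_lTensor_of_subsingleton_tor
    {N M : ModuleCat A} (P : ProjectiveResolution M) {i j k : ℕ} (hij : j + 1 = i) (hjk : k + 1 = j)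
    (h : Subsingleton (((Tor (ModuleCat A) j).obj N).obj M)) :
    Function.Exact ((P.complex.d i j).hom.lTensor N) ((P.complex.d j k).hom.lTensor N) := by
  set F := (MonoidalCategory.tensoringLeft (ModuleCat A)).obj N
  have hzero : Limits.IsZero ((F.leftDerived j).obj M) :=
    @ModuleCat.isZero_of_subsingleton _ _ _ h
  have hexact := (HomologicalComplex.exactAt_iff_isZero_homology _ _).mpr
    (hzero.of_iso (P.isoLeftDerivedObj F j).symm)
  rw [HomologicalComplex.exactAt_iff' _ i j k (by simp [← hij]) (by simp [← hjk]),
    ShortComplex.moduleCat_exact_iff_range_eq_ker] at hexact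
  exact LinearMap.exact_iff.mpr hexact.symm

theorem ker_lsmul_le_range_lsmul_of_subsingleton_tor_one {M : Type u}
    [AddCommGroup M] [Module A M] {x y : A} (hA : ker (lsmul A A x) ≤ range (lsmul A A y))
    (hTor : Subsingleton (((Tor (ModuleCat A) 1).obj
      (ModuleCat.of A (A ⧸ Ideal.span {x}))).obj (ModuleCat.of A M))) :
    ker (lsmul A M x) ≤ range (lsmul A M y) := by
  intro m hm
  obtain ⟨P⟩ : Nonempty (ProjectiveResolution (ModuleCat.of A M)) := HasProjectiveResolution.out
  set ε := (P.π.f 0).hom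
  set d₁ := (P.complex.d 1 0).hom
  have hε : Function.Surjective ε := (ModuleCat.epi_iff_surjective _).mp inferInstance
  have hεd : ∀ n, ε (d₁ n) = 0 := fun n =>
    congrArg (fun φ => φ.hom n) P.complex_d_comp_π_f_zero
  have hdd : ∀ v, d₁ ((P.complex.d 2 1).hom v) = 0 := fun v =>
    congrArg (fun φ => φ.hom v) (P.complex.d_comp_d 2 1 0)
  obtain ⟨w, rfl⟩ := hε m
  obtain ⟨u, hu⟩ : ∃ u, d₁ u = x • w :=
    (ShortComplex.moduleCat_exact_iff _).mp P.exact₀ (x • w) (by rw [map_smul]; exact hm)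
  -- `1 ⊗ u` is a cycle of `A/xA ⊗ P`, so `Tor₁ = 0` makes `u` a boundary modulo `x`.
  have hsplit := mem_range_sup_smul_top_of_exact_lTensor
    (P.exact_lTensor_of_subsingleton_tor rfl rfl hTor) (u := u)
    (by rw [hu, Ideal.span_singleton_smul_top_eq_range_lsmul]; exact mem_range_self _ w)
  rw [Ideal.span_singleton_smul_top_eq_range_lsmul] at hsplit
  obtain ⟨_, ⟨v, rfl⟩, _, ⟨n, rfl⟩, huv⟩ := Submodule.mem_sup.mp hsplit
  have hxw : w - d₁ n ∈ ker (lsmul A _ x) := by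
    rw [mem_ker, lsmul_apply, smul_sub, ← hu, ← map_smul, ← map_sub, ← huv, lsmul_apply,
      add_sub_cancel_right]
    exact hdd v
  obtain ⟨p, hp⟩ := Module.Flat.ker_lsmul_le_range_lsmul hA hxw
  change y • p = w - d₁ n at hp
  refine ⟨ε p, ?_⟩
  change y • ε p = ε w
  rw [← map_smul, hp, map_sub, hεd, sub_zero]

end Tor

section Presentation

open LinearMap

variable {Q A : Type*} [CommRing Q] [CommRing A]

theorem RingTheory.Sequence.IsWeaklyRegular.isSMulRegular_quotient_ofList {rs : List Q} {g : Q}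
    (h : IsWeaklyRegular Q (rs ++ [g])) : IsSMulRegular (Q ⧸ Ideal.ofList rs) g := by
  have := ((isWeaklyRegular_append_iff Q rs [g]).mp h).2
  rwa [isWeaklyRegular_singleton_iff, smul_eq_mul, Ideal.mul_top] at this

theorem ker_lsmul_le_range_lsmul_pow_pred {q : Q →+* A} (hq : Function.Surjective q)
    {s : Set Q} {g : Q} {r : ℕ} (hr : 1 ≤ r)
    (hker : RingHom.ker q = Ideal.span (insert (g ^ r) s))
    (hreg : IsSMulRegular (Q ⧸ Ideal.span s) g) :
    ker (lsmul A A (q g)) ≤ range (lsmul A A (q g ^ (r - 1))) := by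
  intro a ha
  obtain ⟨b, rfl⟩ := hq a
  have hgb : g * b ∈ Ideal.span (insert (g ^ r) s) := by
    rw [← hker, RingHom.mem_ker, map_mul]
    exact ha
  obtain ⟨_, hc, v, hv, hcv⟩ := Submodule.mem_sup.mp (by rwa [Ideal.span_insert] at hgb)
  obtain ⟨c, rfl⟩ := Ideal.mem_span_singleton'.mp hc
  have hpow : g ^ r = g * g ^ (r - 1) := by rw [← pow_succ', Nat.sub_add_cancel hr]
  have hmem : g • (b - c * g ^ (r - 1)) ∈ Ideal.span s := by
    rw [smul_eq_mul, mul_sub, ← hcv, hpow]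
    convert hv using 1
    ring
  have hzero : q (b - c * g ^ (r - 1)) = 0 := by
    rw [← RingHom.mem_ker, hker]
    exact Ideal.span_mono (Set.subset_insert _ _)
      (mem_of_isSMulRegular_quotient_of_smul_mem hreg hmem)
  refine ⟨q c, ?_⟩
  rw [map_sub, sub_eq_zero] at hzero
  rw [lsmul_apply, smul_eq_mul, hzero, map_mul, map_pow, mul_comm]

end Presentation

theorem stmt_1_general
    (Q : Type) [CommRing Q]
    (c : ℕ)
    (f : Fin (c - 1) → Q) (g : Q)
    (hfreg : RingTheory.Sequence.IsRegular Q (List.ofFn f ++ [g]))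
    (r : ℕ) (hr : 2 ≤ r)
    (A : Type) [CommRing A]
    (q : Q →+* A) (hq : Function.Surjective q)
    (hker : RingHom.ker q = Ideal.span (insert (g ^ r) (Set.range f))) :
    ∃ m : ℕ, 2 ≤ m ∧
      ∀ (M : Type) [AddCommGroup M] [Module A M] [Module.Finite A M],
        (∀ i : ℕ, 1 ≤ i →
          Subsingleton
            (((Tor (ModuleCat A) i).obj
              (ModuleCat.of A (A ⧸ Ideal.span {q g}))).obj (ModuleCat.of A M))) →
        (m : ℕ∞) ∣ moduleLength A M := by
  have hspan : Ideal.ofList (List.ofFn f) = Ideal.span (Set.range f) := by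
    simp [Ideal.ofList, List.mem_ofFn, Set.range]
  have hreg : IsSMulRegular (Q ⧸ Ideal.span (Set.range f)) g :=
    hspan ▸ hfreg.toIsWeaklyRegular.isSMulRegular_quotient_ofList
  have hnil : q g ^ r = 0 := by
    rw [← map_pow, ← RingHom.mem_ker, hker]
    exact Ideal.subset_span (Set.mem_insert _ _)
  have hann := ker_lsmul_le_range_lsmul_pow_pred hq (by omega) hker hreg
  refine ⟨r, hr, fun M _ _ _ hTor => ?_⟩
  rw [moduleLength_eq_length, Module.length_eq_mul_length_ker_lsmul hnil
    (ker_lsmul_le_range_lsmul_of_subsingleton_tor_one hann (hTor 1 le_rfl))]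
  exact dvd_mul_right _ _

/-- `Q` is a regular local ring of dimension `c ≥ 2` with algebraically closed
residue field, `f₁,…,f_{c-1}, g` is a `Q`-regular sequence with `f i ∈ 𝔫²` and `g ∈ 𝔫`,
`A = Q/(f₁,…,f_{c-1}, g^r)` with `r ≥ 2` (presented via the surjection `q`), and
`H = Q/(f₁,…,f_{c-1}, g) = A/(gA)`.  Then there is `m ≥ 2` dividing `ℓ(M)` for every finitely
generated `A`-module with `Tor_i^A(H, M) = 0` for all `i ≥ 1`. -/
theorem stmt_1
    (Q : Type) [CommRing Q] [IsLocalRing Q] [IsNoetherianRing Q]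
    [IsAlgClosed (IsLocalRing.ResidueField Q)]
    (c : ℕ) (hc : 2 ≤ c)
    (hdim : ringKrullDim Q = c)
    (hregular : ∃ s : Finset Q, s.card = c ∧
      Ideal.span (s : Set Q) = IsLocalRing.maximalIdeal Q)
    (f : Fin (c - 1) → Q) (g : Q)
    (hf2 : ∀ i, f i ∈ IsLocalRing.maximalIdeal Q ^ 2)
    (hg : g ∈ IsLocalRing.maximalIdeal Q)
    (hfreg : RingTheory.Sequence.IsRegular Q (List.ofFn f ++ [g]))
    (r : ℕ) (hr : 2 ≤ r)
    (A : Type) [CommRing A]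
    (q : Q →+* A) (hq : Function.Surjective q)
    (hker : RingHom.ker q = Ideal.span (insert (g ^ r) (Set.range f))) :
    ∃ m : ℕ, 2 ≤ m ∧
      ∀ (M : Type) [AddCommGroup M] [Module A M] [Module.Finite A M],
        (∀ i : ℕ, 1 ≤ i →
          Subsingleton
            (((Tor (ModuleCat A) i).obj
              (ModuleCat.of A (A ⧸ Ideal.span {q g}))).obj (ModuleCat.of A M))) →
        (m : ℕ∞) ∣ moduleLength A M :=
  stmt_1_general Q c f g hfreg r hr A q hq hker
end
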